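/- Let ι be a type, E : ι → ℝ, W : ι → ℝ, and λ ∈ ℝ. Suppose a family G assigns a real number G(a₁,…,a_N) to every tuple (N ≥ 2) of indices whose values E_{a_i}² are pairwise distinct, such that: (i) G(a,b) = (W_a − W_b)/(2·(E_a² − E_b²)) for all such pairs; (ii) for every N ≥ 3, G(a₁,a₂,…,a_N) = λ·(G(a₁,a₃,…,a_N) − G(a₂,a₃,…,a_N))/(E_{a₁}² − E_{a₂}²). Then for every N ≥ 2 and every such tuple, G(a₁,…,a_N) = (λ^{N−2}/2)·Σ_{k=1}^N W_{a_k}·∏_{l=1, l≠k}^N 1/(E_{a_k}² − E_{a_l}²). -/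

import Mathlib

/-!
With `x_a = E_a²`, the claimed right-hand side is `λ^{N-2}/2` times the divided difference
`W[x_{a₁}, …, x_{a_N}]` in Lagrange's form. The divided difference over `N` nodes is the
coefficient of degree `N - 1` of the Lagrange interpolation polynomial, and comparing that
coefficient in Neville's identity gives `(x_p - x_q) W[s] = W[s ∖ q] - W[s ∖ p]`, which is exactly
the Schwinger–Dyson recursion. Induction on `N` then closes the argument.
-/

open Finset Polynomial

namespace Lagrange

variable {F ι κ : Type*} [Field F] [DecidableEq ι]

def dividedDifference (s : Finset ι) (v r : ι → F) : F :=
  ∑ i ∈ s, r i * nodalWeight s v i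

theorem dividedDifference_map [DecidableEq κ] (s : Finset κ) (f : κ ↪ ι) (v r : ι → F) :
    dividedDifference (s.map f) v r = dividedDifference s (v ∘ f) (r ∘ f) := by
  simp only [dividedDifference, nodalWeight, sum_map, ← map_erase, prod_map, Function.comp_apply]

theorem dividedDifference_eq_coeff_interpolate {s : Finset ι} {v : ι → F} (r : ι → F)
    (hvs : Set.InjOn v s) {n : ℕ} (hn : #s = n + 1) :
    dividedDifference s v r = (interpolate s v r).coeff n := by
  rw [show n = #s - 1 by omega, coeff_eq_sum hvs (degree_interpolate_lt _ hvs)]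
  refine sum_congr rfl fun i hi ↦ ?_
  rw [eval_interpolate_at_node _ hvs hi, nodalWeight, prod_inv_distrib, div_eq_mul_inv]

theorem sub_mul_dividedDifference {s : Finset ι} {v : ι → F} (r : ι → F)
    (hvs : Set.InjOn v s) {i j : ι} (hi : i ∈ s) (hj : j ∈ s) (hij : i ≠ j) :
    (v i - v j) * dividedDifference s v r
      = dividedDifference (s.erase j) v r - dividedDifference (s.erase i) v r := by
  obtain ⟨n, hn⟩ : ∃ n, #s = n + 2 :=
    ⟨#s - 2, by have := one_lt_card.mpr ⟨i, hi, j, hj, hij⟩; omega⟩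
  have hcard {k : ι} (hk : k ∈ s) : #(s.erase k) = n + 1 := by
    rw [card_erase_of_mem hk, hn]; rfl
  have top_coeff_eq_zero {k : ι} (hk : k ∈ s) : (interpolate (s.erase k) v r).coeff (n + 1) = 0 :=
    coeff_eq_zero_of_degree_lt <| (hcard hk) ▸ degree_interpolate_lt _ (hvs.mono (erase_subset k s))
  have hvij : v i - v j ≠ 0 := sub_ne_zero.mpr fun h ↦ hij (hvs hi hj h)
  rw [dividedDifference_eq_coeff_interpolate r hvs hn,
    dividedDifference_eq_coeff_interpolate r (hvs.mono (erase_subset j s)) (hcard hj),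
    dividedDifference_eq_coeff_interpolate r (hvs.mono (erase_subset i s)) (hcard hi),
    interpolate_eq_add_interpolate_erase _ hvs hi hj hij, basisDivisor, basisDivisor, coeff_add,
    mul_left_comm, coeff_C_mul, coeff_mul_X_sub_C, mul_left_comm, coeff_C_mul, coeff_mul_X_sub_C,
    top_coeff_eq_zero hi, top_coeff_eq_zero hj, ← neg_sub (v i)]
  field_simp
  ring

theorem dividedDifference_pair (v r : ι → F) {i j : ι} (hij : v i ≠ v j) :
    dividedDifference {i, j} v r = (r i - r j) / (v i - v j) := by
  have hij' : i ≠ j := fun h ↦ hij (congrArg v h)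
  rw [dividedDifference, sum_pair hij', nodalWeight, nodalWeight, erase_insert_eq_erase,
    erase_insert_of_ne hij', erase_singleton, insert_empty,
    erase_eq_of_notMem (notMem_singleton.mpr hij'), prod_singleton, prod_singleton, ← neg_sub (v j)]
  field_simp
  ring

theorem sub_mul_dividedDifference_fin {m : ℕ} (v r : Fin (m + 2) → F)
    (hv : Function.Injective v) :
    (v 0 - v 1) * dividedDifference univ v r
      = dividedDifference univ (v ∘ Fin.succAbove 1) (r ∘ Fin.succAbove 1)
        - dividedDifference univ (v ∘ Fin.succ) (r ∘ Fin.succ) := by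
  have erase_eq (p : Fin (m + 2)) : univ.erase p = univ.map p.succAboveEmb := by
    rw [Fin.univ_succAbove _ p, erase_cons]
  rw [sub_mul_dividedDifference r hv.injOn (mem_univ 0) (mem_univ 1) Fin.zero_ne_one,
    erase_eq, erase_eq, dividedDifference_map, dividedDifference_map]
  rfl

end Lagrange


open Lagrange

theorem stmt_5 {ι : Type*} (E W : ι → ℝ) (lam : ℝ)
    (G : (N : ℕ) → (Fin N → ι) → ℝ)
    (h2 : ∀ a : Fin 2 → ι, (∀ i j, i ≠ j → E (a i) ^ 2 ≠ E (a j) ^ 2) →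
      G 2 a = (W (a 0) - W (a 1)) / (2 * (E (a 0) ^ 2 - E (a 1) ^ 2)))
    (hrec : ∀ (n : ℕ) (a : Fin (n + 3) → ι),
      (∀ i j, i ≠ j → E (a i) ^ 2 ≠ E (a j) ^ 2) →
      G (n + 3) a = lam * (G (n + 2) (a ∘ (1 : Fin (n + 3)).succAbove)
          - G (n + 2) (a ∘ Fin.succ)) / (E (a 0) ^ 2 - E (a 1) ^ 2)) :
    ∀ (n : ℕ) (a : Fin (n + 2) → ι),
      (∀ i j, i ≠ j → E (a i) ^ 2 ≠ E (a j) ^ 2) →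
      G (n + 2) a = lam ^ n / 2 *
        ∑ k : Fin (n + 2), W (a k) *
          ∏ l ∈ Finset.univ.erase k, (E (a k) ^ 2 - E (a l) ^ 2)⁻¹ := by
  set v : ι → ℝ := fun x ↦ E x ^ 2
  -- the sum in the claim is `dividedDifference` unfolded
  suffices ∀ (n : ℕ) (a : Fin (n + 2) → ι), (∀ i j, i ≠ j → v (a i) ≠ v (a j)) →
      G (n + 2) a = lam ^ n / 2 * dividedDifference univ (v ∘ a) (W ∘ a) from this
  intro n
  induction n with
  | zero =>
    intro a ha
    rw [h2 a ha, show (univ : Finset (Fin 2)) = {0, 1} by decide,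
      dividedDifference_pair (v ∘ a) (W ∘ a) (ha 0 1 Fin.zero_ne_one)]
    have hne : E (a 0) ^ 2 - E (a 1) ^ 2 ≠ 0 := sub_ne_zero.mpr (ha 0 1 Fin.zero_ne_one)
    simp only [Function.comp_apply, v]
    field_simp
  | succ n ih =>
    intro a ha
    have key := sub_mul_dividedDifference_fin (v ∘ a) (W ∘ a) fun i j ↦ not_imp_not.mp (ha i j)
    simp only [Function.comp_assoc] at key
    have hne : E (a 0) ^ 2 - E (a 1) ^ 2 ≠ 0 := sub_ne_zero.mpr (ha 0 1 Fin.zero_ne_one)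
    rw [hrec n a ha,
      ih (a ∘ Fin.succAbove 1) fun i j hij ↦ ha _ _ (Fin.succAbove_right_injective.ne hij),
      ih (a ∘ Fin.succ) fun i j hij ↦ ha _ _ (Fin.succ_injective _ |>.ne hij), ← mul_sub, ← key]
    simp only [Function.comp_apply, v]
    field_simp
    ring
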